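/- Let m > n ≥ 3 be integers. Then there exists a constant C > 0 such that for all real T > 0 and all y ∈ ℝ^m with |y| ≥ 1: ∫_{{x ∈ ℝ^m : |x| ≥ 1, |x−y| ≥ 2T}} ∫_0^T ∫_0^∞ ( |x|^{m-2} |y|^{m-2} (s + t + |x| + |y|)^{n+2} )^{-1} ds dt dx ≤ C. -/

import Mathlib

/-!
Since `‖y‖ ≥ 1`, the integrand is at most `‖x‖^{-(m-2)} (s + t + ‖x‖)^{-(n+2)}`, which no longer
involves `y` or the constraint `‖x - y‖ ≥ 2T`. Extending the `t`-integral to `(0, ∞)`, the two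
one-dimensional integrals are explicit and give `‖x‖^{-(m-2+n)} / (n(n+1))`; as `m - 2 + n > m`,
this is integrable over `‖x‖ ≥ 1` in `ℝ^m`.
-/

open MeasureTheory Set

lemma lintegral_Ioi_add_rpow_neg {p b : ℝ} (hp : 0 < p) (hb : 0 < b) :
    ∫⁻ s in Ioi (0 : ℝ), ENNReal.ofReal ((s + b) ^ (-(p + 1))) =
      ENNReal.ofReal (b ^ (-p) / p) := by
  have hshift : ∫⁻ s in Ioi (0 : ℝ), ENNReal.ofReal ((s + b) ^ (-(p + 1))) =
      ∫⁻ u in Ioi b, ENNReal.ofReal (u ^ (-(p + 1))) := by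
    conv_rhs => rw [← map_add_right_eq_self volume b]
    rw [setLIntegral_map measurableSet_Ioi (by fun_prop) (measurable_add_const b)]
    simp
  have hp' : -(p + 1) < -1 := by linarith
  rw [hshift, ← ofReal_integral_eq_lintegral_ofReal (integrableOn_Ioi_rpow_of_lt hp' hb),
    integral_Ioi_rpow_of_lt hp' hb]
  · congr 1
    rw [show -(p + 1) + 1 = -p by ring, neg_div_neg_eq]
  · filter_upwards [ae_restrict_mem measurableSet_Ioi] with u hu
    exact Real.rpow_nonneg (hb.trans hu).le _

lemma lintegral_Ioi_lintegral_Ioi_add_rpow_neg {p a : ℝ} (hp : 0 < p) (ha : 0 < a) :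
    ∫⁻ t in Ioi (0 : ℝ), ∫⁻ s in Ioi (0 : ℝ), ENNReal.ofReal ((s + t + a) ^ (-(p + 2))) =
      ENNReal.ofReal (a ^ (-p) / (p * (p + 1))) := by
  have hinner : ∀ t ∈ Ioi (0 : ℝ),
      ∫⁻ s in Ioi (0 : ℝ), ENNReal.ofReal ((s + t + a) ^ (-(p + 2))) =
        ENNReal.ofReal ((p + 1)⁻¹) * ENNReal.ofReal ((t + a) ^ (-(p + 1))) := fun t ht => by
    simp_rw [add_assoc _ t a, show -(p + 2) = -((p + 1) + 1) by ring]
    rw [lintegral_Ioi_add_rpow_neg (by linarith) (by linarith [ht.out]), div_eq_inv_mul,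
      ENNReal.ofReal_mul (by positivity)]
  rw [setLIntegral_congr_fun measurableSet_Ioi hinner,
    lintegral_const_mul' _ _ ENNReal.ofReal_ne_top, lintegral_Ioi_add_rpow_neg hp ha,
    ← ENNReal.ofReal_mul (by positivity)]
  congr 1
  field_simp

lemma inv_pow_mul_pow_mul_add_pow_le {a b u : ℝ} (k N : ℕ) (ha : 0 < a) (hb : 1 ≤ b)
    (hu : 0 ≤ u) :
    (a ^ k * b ^ k * (u + a + b) ^ N)⁻¹ ≤ a ^ (-(k : ℝ)) * (u + a) ^ (-(N : ℝ)) := by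
  have hua : 0 < u + a := by linarith
  have hle : a ^ k * (u + a) ^ N ≤ a ^ k * b ^ k * (u + a + b) ^ N := by
    have hbk : 1 ≤ b ^ k := one_le_pow₀ hb
    have hN : (u + a) ^ N ≤ (u + a + b) ^ N := pow_le_pow_left₀ hua.le (by linarith) N
    calc a ^ k * (u + a) ^ N ≤ a ^ k * b ^ k * (u + a) ^ N := by
          gcongr; exact le_mul_of_one_le_right (by positivity) hbk
      _ ≤ a ^ k * b ^ k * (u + a + b) ^ N := by gcongr
  rw [Real.rpow_neg ha.le, Real.rpow_neg hua.le, Real.rpow_natCast, Real.rpow_natCast, ← mul_inv]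
  gcongr

lemma lintegral_Ioo_lintegral_Ioi_inv_le_rpow_neg {a b T : ℝ} (k n : ℕ) (ha : 0 < a) (hb : 1 ≤ b)
    (hn : 0 < n) :
    ∫⁻ t in Ioo (0 : ℝ) T, ∫⁻ s in Ioi (0 : ℝ),
        ENNReal.ofReal ((a ^ k * b ^ k * (s + t + a + b) ^ (n + 2))⁻¹) ≤
      ENNReal.ofReal ((n * (n + 1))⁻¹) * ENNReal.ofReal (a ^ (-(k + n : ℝ))) := by
  calc _ ≤ ∫⁻ t in Ioi (0 : ℝ), ∫⁻ s in Ioi (0 : ℝ),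
          ENNReal.ofReal (a ^ (-(k : ℝ))) * ENNReal.ofReal ((s + t + a) ^ (-(n + 2 : ℝ))) := by
        refine (lintegral_mono_set Ioo_subset_Ioi_self).trans ?_
        refine setLIntegral_mono' measurableSet_Ioi fun t ht => ?_
        refine setLIntegral_mono' measurableSet_Ioi fun s hs => ?_
        rw [← ENNReal.ofReal_mul (by positivity)]
        refine ENNReal.ofReal_le_ofReal ?_
        exact_mod_cast inv_pow_mul_pow_mul_add_pow_le k (n + 2) ha hb
          (add_pos (mem_Ioi.1 hs) (mem_Ioi.1 ht)).le
    _ = ENNReal.ofReal (a ^ (-(k : ℝ))) * ENNReal.ofReal (a ^ (-(n : ℝ)) / (n * (n + 1))) := by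
        simp_rw [lintegral_const_mul' _ _ ENNReal.ofReal_ne_top]
        rw [lintegral_Ioi_lintegral_Ioi_add_rpow_neg (by exact_mod_cast hn) ha]
    _ = _ := by
        rw [← ENNReal.ofReal_mul (by positivity), ← ENNReal.ofReal_mul (by positivity)]
        congr 1
        rw [neg_add, Real.rpow_add ha]
        ring

lemma rpow_neg_le_two_rpow_mul_one_add_rpow_neg {r q : ℝ} (hr : 1 ≤ r) (hq : 0 ≤ q) :
    r ^ (-q) ≤ 2 ^ q * (1 + r) ^ (-q) := by
  have hhalf : (1 + r) / 2 ≤ r := by linarith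
  calc r ^ (-q) ≤ ((1 + r) / 2) ^ (-q) :=
        Real.rpow_le_rpow_of_nonpos (by positivity) hhalf (neg_nonpos.2 hq)
    _ = 2 ^ q * (1 + r) ^ (-q) := by
        rw [Real.div_rpow (by positivity) (by norm_num), Real.rpow_neg (by norm_num : (0:ℝ) ≤ 2)]
        field_simp

lemma setLIntegral_one_le_norm_rpow_neg_lt_top {E : Type*} [NormedAddCommGroup E]
    [NormedSpace ℝ E] [FiniteDimensional ℝ E] [MeasurableSpace E] [BorelSpace E]
    (μ : Measure E) [μ.IsAddHaarMeasure] {q : ℝ} (hq : (Module.finrank ℝ E : ℝ) < q) :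
    ∫⁻ x in {x : E | 1 ≤ ‖x‖}, ENNReal.ofReal (‖x‖ ^ (-q)) ∂μ < ⊤ := by
  have hq0 : 0 ≤ q := (Nat.cast_nonneg _).trans hq.le
  calc _ ≤ ∫⁻ x in {x : E | 1 ≤ ‖x‖},
          ENNReal.ofReal (2 ^ q) * ENNReal.ofReal ((1 + ‖x‖) ^ (-q)) ∂μ := by
        refine setLIntegral_mono (by fun_prop) fun x hx => ?_
        rw [← ENNReal.ofReal_mul (by positivity)]
        exact ENNReal.ofReal_le_ofReal (rpow_neg_le_two_rpow_mul_one_add_rpow_neg hx hq0)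
    _ ≤ ∫⁻ x, ENNReal.ofReal (2 ^ q) * ENNReal.ofReal ((1 + ‖x‖) ^ (-q)) ∂μ :=
        setLIntegral_le_lintegral _ _
    _ < ⊤ := by
        rw [lintegral_const_mul' _ _ ENNReal.ofReal_ne_top]
        exact ENNReal.mul_lt_top ENNReal.ofReal_lt_top (finite_integral_one_add_norm hq)

theorem E2_estimate_general (m n : ℕ) (hn : 3 ≤ n) :
    ∃ C > 0, ∀ T : ℝ, 0 < T → ∀ y : EuclideanSpace ℝ (Fin m), 1 ≤ ‖y‖ →
      ∫⁻ x in {x : EuclideanSpace ℝ (Fin m) | 1 ≤ ‖x‖ ∧ 2 * T ≤ ‖x - y‖},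
        ∫⁻ t in Set.Ioo (0 : ℝ) T,
          ∫⁻ s in Set.Ioi (0 : ℝ),
            ENNReal.ofReal
              ((‖x‖ ^ (m - 2) * ‖y‖ ^ (m - 2) * (s + t + ‖x‖ + ‖y‖) ^ (n + 2))⁻¹) ≤
        ENNReal.ofReal C := by
  have hq : (Module.finrank ℝ (EuclideanSpace ℝ (Fin m)) : ℝ) < (m - 2 : ℕ) + (n : ℝ) := by
    rw [finrank_euclideanSpace_fin]
    exact_mod_cast (by omega : m < m - 2 + n)
  set L := ENNReal.ofReal ((n * (n + 1))⁻¹) * ∫⁻ x in {x : EuclideanSpace ℝ (Fin m) | 1 ≤ ‖x‖},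
    ENNReal.ofReal (‖x‖ ^ (-((m - 2 : ℕ) + n : ℝ))) with hL_def
  have hL : L ≠ ⊤ := ENNReal.mul_ne_top ENNReal.ofReal_ne_top
    (setLIntegral_one_le_norm_rpow_neg_lt_top volume hq).ne
  refine ⟨L.toReal + 1, by positivity, fun T _ y hy => ?_⟩
  calc _ ≤ ∫⁻ x in {x : EuclideanSpace ℝ (Fin m) | 1 ≤ ‖x‖}, ∫⁻ t in Ioo (0 : ℝ) T,
          ∫⁻ s in Ioi (0 : ℝ), ENNReal.ofReal
            ((‖x‖ ^ (m - 2) * ‖y‖ ^ (m - 2) * (s + t + ‖x‖ + ‖y‖) ^ (n + 2))⁻¹) :=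
        lintegral_mono_set fun x hx => hx.1
    _ ≤ L := by
        rw [hL_def, ← lintegral_const_mul' _ _ ENNReal.ofReal_ne_top]
        refine setLIntegral_mono (by fun_prop) fun x hx => ?_
        exact lintegral_Ioo_lintegral_Ioi_inv_le_rpow_neg _ _ (one_pos.trans_le hx) hy (by omega)
    _ = ENNReal.ofReal L.toReal := (ENNReal.ofReal_toReal hL).symm
    _ ≤ _ := ENNReal.ofReal_le_ofReal (by linarith)

/-- Estimate of the term E₂ in Section 3.1: for integers `m > n ≥ 3` there is `C > 0`
such that for all `T > 0` and all `y ∈ ℝ^m` with `|y| ≥ 1`,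
`∫_{|x| ≥ 1, |x-y| ≥ 2T} ∫_0^T ∫_0^∞ (|x|^{m-2}|y|^{m-2}(s+t+|x|+|y|)^{n+2})^{-1} ds dt dx ≤ C`. -/
theorem E2_estimate (m n : ℕ) (hn : 3 ≤ n) (hmn : n < m) :
    ∃ C > 0, ∀ T : ℝ, 0 < T → ∀ y : EuclideanSpace ℝ (Fin m), 1 ≤ ‖y‖ →
      ∫⁻ x in {x : EuclideanSpace ℝ (Fin m) | 1 ≤ ‖x‖ ∧ 2 * T ≤ ‖x - y‖},
        ∫⁻ t in Set.Ioo (0 : ℝ) T,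
          ∫⁻ s in Set.Ioi (0 : ℝ),
            ENNReal.ofReal
              ((‖x‖ ^ (m - 2) * ‖y‖ ^ (m - 2) * (s + t + ‖x‖ + ‖y‖) ^ (n + 2))⁻¹) ≤
        ENNReal.ofReal C :=
  E2_estimate_general m n hn
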